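/- arXiv:math/0507483 — 2 statements merged into one kernel-verified Lean document; each statement's English description precedes it below -/
import Mathlib

section
/- Let m ≥ 1 and d = 2m. Let 𝓗 : ℝ^d → ℝ be three times continuously differentiable and define ψ(z) = ⟨J∇𝓗(z), (Hess 𝓗(z))(J∇𝓗(z))⟩. Let A be a symmetric d × d real matrix, b ∈ ℝ^d, c ∈ ℝ, and L(z) = ½⟨z, Az⟩ + ⟨b, z⟩ + c a quadratic function such that ⟨∇L(z), J∇𝓗(z)⟩ = 0 for all z ∈ ℝ^d. Suppose z₀, z₁ ∈ ℝ^d and λ, μ ∈ ℝ satisfy z₁ − z₀ = λ J∇𝓗(z̄) + μ J∇ψ(z̄), where z̄ = (z₀ + z₁)/2. Then L(z₁) = L(z₀). -/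
noncomputable section

open scoped RealInnerProductSpace

/-- `ℝ^m` with the Euclidean inner product. -/
abbrev V (m : ℕ) : Type := EuclideanSpace ℝ (Fin m)

/-- Phase space `ℝ^m × ℝ^m ≅ ℝ^(2m)`, with the Euclidean (`L²`) inner product. -/
abbrev Phase (m : ℕ) : Type := WithLp 2 (V m × V m)

/-- The identification `Phase m ≃ ℝ^m × ℝ^m`. -/
def e (m : ℕ) : Phase m ≃L[ℝ] V m × V m := WithLp.prodContinuousLinearEquiv 2 ℝ (V m) (V m)

/-- The point `z = (q, p)` of phase space. -/
def pt {m : ℕ} (q p : V m) : Phase m := (e m).symm (q, p)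

/-- The position (`q`) part of a phase-space point. -/
def qpart {m : ℕ} (z : Phase m) : V m := ((e m) z).1

/-- The momentum (`p`) part of a phase-space point. -/
def ppart {m : ℕ} (z : Phase m) : V m := ((e m) z).2

/-- The standard symplectic matrix `J`, acting by `J (q, p) = (p, -q)`. -/
def Jmap {m : ℕ} : Phase m →L[ℝ] Phase m :=
  ((e m).symm : V m × V m →L[ℝ] Phase m).comp
    (((ContinuousLinearMap.snd ℝ (V m) (V m)).prod
      (-(ContinuousLinearMap.fst ℝ (V m) (V m)))).comp ((e m) : Phase m →L[ℝ] V m × V m))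

/-- The Hessian of `H` at `z`, viewed as a linear map: the derivative of the gradient. -/
def hess {m : ℕ} (H : Phase m → ℝ) (z : Phase m) : Phase m →L[ℝ] Phase m :=
  fderiv ℝ (gradient H) z

/-- `ψ_H(z) = ⟨J ∇H(z), (Hess H(z)) (J ∇H(z))⟩`. -/
def psi {m : ℕ} (H : Phase m → ℝ) (z : Phase m) : ℝ :=
  ⟪Jmap (gradient H z), hess H z (Jmap (gradient H z))⟫


/-!
Because `L` is quadratic, the midpoint rule is exact for it:
`L z₁ - L z₀ = ⟪∇L z̄, z₁ - z₀⟫ = ⟪A z̄ + b, z₁ - z₀⟫`. By the step equation it therefore suffices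
that `L` Poisson-commutes with `𝓗` (the hypothesis) and with `ψ`. The Hamiltonian field
`w z = J (A z + b)` of `L` has constant derivative `J A`. Differentiating `⟪∇𝓗, w⟫ ≡ 0` gives
`Hess 𝓗 (w z) = A (J ∇𝓗 z)`; differentiating once more and using the symmetry of the third
derivative expresses `D³𝓗 (w, ·, ·)`. Substituting both into the derivative of `ψ` along `w`, the
remaining terms cancel because `J` is skew-adjoint and `A` is symmetric.
-/

open scoped Gradient

section InnerProductSpace

variable {E : Type*} [NormedAddCommGroup E] [InnerProductSpace ℝ E]

theorem quadratic_sub_eq_inner_midpoint (A : E →L[ℝ] E) (hA : ∀ v w : E, ⟪A v, w⟫ = ⟪v, A w⟫)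
    (b : E) (c : ℝ) (z₀ z₁ : E) :
    ((1 / 2 : ℝ) * ⟪z₁, A z₁⟫ + ⟪b, z₁⟫ + c) - ((1 / 2 : ℝ) * ⟪z₀, A z₀⟫ + ⟪b, z₀⟫ + c)
      = ⟪A ((2 : ℝ)⁻¹ • (z₀ + z₁)) + b, z₁ - z₀⟫ := by
  have hA₀₁ : ⟪z₀, A z₁⟫ = ⟪z₁, A z₀⟫ := by rw [← hA, real_inner_comm]
  simp only [map_smul, map_add, inner_add_left, inner_sub_right, real_inner_smul_left, hA,
    hA₀₁]
  ring

variable [CompleteSpace E]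

theorem hasGradientAt_quadratic (A : E →L[ℝ] E) (hA : ∀ v w : E, ⟪A v, w⟫ = ⟪v, A w⟫)
    (b : E) (c : ℝ) (z : E) :
    HasGradientAt (fun x => (1 / 2 : ℝ) * ⟪x, A x⟫ + ⟪b, x⟫ + c) (A z + b) z := by
  rw [hasGradientAt_iff_hasFDerivAt]
  refine ((((hasFDerivAt_id z).inner ℝ A.hasFDerivAt).const_mul (1 / 2 : ℝ)).add
    ((hasFDerivAt_const b z).inner ℝ (hasFDerivAt_id z))).add_const c |>.congr_fderiv ?_
  ext v
  simp only [add_apply, smul_apply, ContinuousLinearMap.comp_apply,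
    ContinuousLinearMap.prod_apply, ContinuousLinearMap.id_apply, fderivInnerCLM_apply, hA,
    real_inner_comm (A z), zero_apply, inner_zero_left, add_zero, map_add,
    InnerProductSpace.toDual_apply_apply, smul_eq_mul, id_eq]
  ring

theorem contDiff_gradient {f : E → ℝ} {n k : WithTop ℕ∞} (hf : ContDiff ℝ n f) (hk : k + 1 ≤ n) :
    ContDiff ℝ k (∇ f) :=
  (InnerProductSpace.toDual ℝ E).symm.contDiff.comp (hf.fderiv_right hk)

theorem inner_fderiv_gradient_apply (f : E → ℝ) (z a w : E) :
    ⟪fderiv ℝ (∇ f) z a, w⟫ = fderiv ℝ (fderiv ℝ f) z a w := by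
  rw [show ∇ f = (InnerProductSpace.toDual ℝ E).symm ∘ fderiv ℝ f from rfl,
    LinearIsometryEquiv.comp_fderiv]
  exact InnerProductSpace.toDual_symm_apply

theorem inner_fderiv_gradient_comm {f : E → ℝ} {z : E} (hf : ContDiffAt ℝ 2 f z) (a w : E) :
    ⟪fderiv ℝ (∇ f) z a, w⟫ = ⟪a, fderiv ℝ (∇ f) z w⟫ := by
  rw [inner_fderiv_gradient_apply, real_inner_comm, inner_fderiv_gradient_apply]
  exact (hf.isSymmSndFDerivAt (by simp)).eq a w

variable (J A : E →L[ℝ] E) (b : E) {f : E → ℝ}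

/-- `ψ` for an arbitrary skew-adjoint `J`: `psi H` is `psiWith Jmap H` by definition. -/
def psiWith (f : E → ℝ) (z : E) : ℝ :=
  ⟪J (∇ f z), fderiv ℝ (∇ f) z (J (∇ f z))⟫

theorem fderiv_gradient_apply_hamiltonianField (hf : ContDiff ℝ 2 f)
    (hJ : ∀ x y : E, ⟪J x, y⟫ = -⟪x, J y⟫) (hA : ∀ v w : E, ⟪A v, w⟫ = ⟪v, A w⟫)
    (hfirst : ∀ z, ⟪A z + b, J (∇ f z)⟫ = 0) (z : E) :
    fderiv ℝ (∇ f) z (J (A z + b)) = A (J (∇ f z)) := by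
  have hG : HasFDerivAt (∇ f) (fderiv ℝ (∇ f) z) z :=
    ((contDiff_gradient (k := 1) hf (by norm_num)).differentiable (by norm_num) z).hasFDerivAt
  have hderiv : ∀ v, ⟪A z + b, J (fderiv ℝ (∇ f) z v)⟫ + ⟪A v, J (∇ f z)⟫ = 0 := by
    have h := (A.hasFDerivAt.add_const b).inner ℝ (J.hasFDerivAt.comp z hG)
    have h0 := h.unique ((hasFDerivAt_const (0 : ℝ) z).congr_of_eventuallyEq
      (Filter.Eventually.of_forall hfirst))
    intro v
    simpa using congr($h0 v)
  refine ext_inner_right ℝ fun v => ?_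
  calc ⟪fderiv ℝ (∇ f) z (J (A z + b)), v⟫
      = -⟪A z + b, J (fderiv ℝ (∇ f) z v)⟫ := by
        rw [inner_fderiv_gradient_comm hf.contDiffAt, hJ]
    _ = ⟪A v, J (∇ f z)⟫ := by linarith [hderiv v]
    _ = ⟪A (J (∇ f z)), v⟫ := by rw [hA, real_inner_comm]

theorem fderiv_fderiv_gradient_apply_hamiltonianField (hf : ContDiff ℝ 3 f)
    (hJ : ∀ x y : E, ⟪J x, y⟫ = -⟪x, J y⟫) (hA : ∀ v w : E, ⟪A v, w⟫ = ⟪v, A w⟫)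
    (hfirst : ∀ z, ⟪A z + b, J (∇ f z)⟫ = 0) (z v : E) :
    fderiv ℝ (fderiv ℝ (∇ f)) z v (J (A z + b))
      = A (J (fderiv ℝ (∇ f) z v)) - fderiv ℝ (∇ f) z (J (A v)) := by
  have hG : ContDiff ℝ 2 (∇ f) := contDiff_gradient hf (by norm_num)
  have hH : HasFDerivAt (fderiv ℝ (∇ f)) (fderiv ℝ (fderiv ℝ (∇ f)) z) z :=
    ((hG.fderiv_right (m := 1) (by norm_num)).differentiable (by norm_num) z).hasFDerivAt
  have hw : HasFDerivAt (fun x => J (A x + b)) (J.comp A) z :=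
    J.hasFDerivAt.comp z (A.hasFDerivAt.add_const b)
  have hAJG : HasFDerivAt (fun x => A (J (∇ f x))) ((A.comp J).comp (fderiv ℝ (∇ f) z)) z :=
    (A.comp J).hasFDerivAt.comp z ((hG.differentiable (by norm_num) z).hasFDerivAt)
  have h := (hH.clm_apply hw).unique (hAJG.congr_of_eventuallyEq (Filter.Eventually.of_forall
    (fderiv_gradient_apply_hamiltonianField J A b (hf.of_le (by norm_num)) hJ hA hfirst)))
  have hv := congr($h v)
  simp only [add_apply, ContinuousLinearMap.comp_apply, ContinuousLinearMap.flip_apply] at hv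
  exact eq_sub_of_add_eq (by rw [add_comm, hv])

theorem fderiv_psiWith_hamiltonianField (hf : ContDiff ℝ 3 f)
    (hJ : ∀ x y : E, ⟪J x, y⟫ = -⟪x, J y⟫) (hA : ∀ v w : E, ⟪A v, w⟫ = ⟪v, A w⟫)
    (hfirst : ∀ z, ⟪A z + b, J (∇ f z)⟫ = 0) (z : E) :
    fderiv ℝ (psiWith J f) z (J (A z + b)) = 0 := by
  have hG : ContDiff ℝ 2 (∇ f) := contDiff_gradient hf (by norm_num)
  have hH : HasFDerivAt (fderiv ℝ (∇ f)) (fderiv ℝ (fderiv ℝ (∇ f)) z) z :=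
    ((hG.fderiv_right (m := 1) (by norm_num)).differentiable (by norm_num) z).hasFDerivAt
  have hu : HasFDerivAt (fun x => J (∇ f x)) (J.comp (fderiv ℝ (∇ f) z)) z :=
    J.hasFDerivAt.comp z ((hG.differentiable (by norm_num) z).hasFDerivAt)
  have hψ : HasFDerivAt (psiWith J f) _ z := hu.inner ℝ (hH.clm_apply hu)
  rw [hψ.fderiv]
  simp only [ContinuousLinearMap.comp_apply, ContinuousLinearMap.prod_apply, add_apply,
    ContinuousLinearMap.flip_apply, fderivInnerCLM_apply]
  rw [fderiv_gradient_apply_hamiltonianField J A b (hf.of_le (by norm_num)) hJ hA hfirst z,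
    (hG.contDiffAt.isSymmSndFDerivAt (by simp)).eq (J (A z + b)),
    fderiv_fderiv_gradient_apply_hamiltonianField J A b hf hJ hA hfirst, add_sub_cancel, ← hA, hJ,
    add_neg_cancel]

theorem inner_J_gradient_psiWith_eq_zero (hf : ContDiff ℝ 3 f)
    (hJ : ∀ x y : E, ⟪J x, y⟫ = -⟪x, J y⟫) (hA : ∀ v w : E, ⟪A v, w⟫ = ⟪v, A w⟫)
    (hfirst : ∀ z, ⟪A z + b, J (∇ f z)⟫ = 0) (z : E) :
    ⟪A z + b, J (∇ (psiWith J f) z)⟫ = 0 := by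
  calc ⟪A z + b, J (∇ (psiWith J f) z)⟫
      = -⟪∇ (psiWith J f) z, J (A z + b)⟫ := by rw [real_inner_comm, hJ]
    _ = 0 := by
        rw [inner_gradient_left, fderiv_psiWith_hamiltonianField J A b hf hJ hA hfirst, neg_zero]

end InnerProductSpace

theorem inner_Jmap_left {m : ℕ} (x y : Phase m) : ⟪Jmap x, y⟫ = -⟪x, Jmap y⟫ := by
  simp [Jmap, e, WithLp.prod_inner_apply]

theorem dth_quadratic_conservation_general (m : ℕ)
    (𝓗 : Phase m → ℝ) (h𝓗 : ContDiff ℝ 3 𝓗)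
    (A : Phase m →L[ℝ] Phase m) (hA : ∀ v w : Phase m, ⟪A v, w⟫ = ⟪v, A w⟫)
    (b : Phase m) (c : ℝ) (L : Phase m → ℝ)
    (hL : ∀ z : Phase m, L z = (1 / 2 : ℝ) * ⟪z, A z⟫ + ⟪b, z⟫ + c)
    (hbracket : ∀ z : Phase m, ⟪gradient L z, Jmap (gradient 𝓗 z)⟫ = 0)
    (z₀ z₁ : Phase m) (lam mu : ℝ)
    (zbar : Phase m) (hzbar : zbar = (2:ℝ)⁻¹ • (z₀ + z₁))
    (hstep : z₁ - z₀
      = lam • Jmap (gradient 𝓗 zbar) + mu • Jmap (gradient (psi 𝓗) zbar)) :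
    L z₁ = L z₀ := by
  have hgradL : ∀ z, ∇ L z = A z + b := fun z =>
    ((hasGradientAt_quadratic A hA b c z).congr_of_eventuallyEq
      (Filter.Eventually.of_forall hL)).gradient
  have hfirst : ∀ z, ⟪A z + b, Jmap (∇ 𝓗 z)⟫ = 0 := fun z => hgradL z ▸ hbracket z
  have hpsi : ⟪A zbar + b, Jmap (∇ (psi 𝓗) zbar)⟫ = 0 :=
    inner_J_gradient_psiWith_eq_zero Jmap A b h𝓗 inner_Jmap_left hA hfirst zbar
  rw [← sub_eq_zero, hL, hL, quadratic_sub_eq_inner_midpoint A hA, ← hzbar, hstep,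
    inner_add_right, real_inner_smul_right, real_inner_smul_right, hfirst, hpsi, mul_zero,
    mul_zero, add_zero]

/-- quadratic conservation laws for the regularized DTH step.
If `L(z) = ½⟨z, Az⟩ + ⟨b, z⟩ + c` is a quadratic first integral of `𝓗`
(`[L, 𝓗] ≡ 0`), and `z₁ - z₀ = λ J∇𝓗(z̄) + μ J∇ψ(z̄)` with `z̄ = (z₀ + z₁)/2`,
then `L(z₁) = L(z₀)`. -/
theorem dth_quadratic_conservation (m : ℕ) (hm : 1 ≤ m)
    (𝓗 : Phase m → ℝ) (h𝓗 : ContDiff ℝ 3 𝓗)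
    (A : Phase m →L[ℝ] Phase m) (hA : ∀ v w : Phase m, ⟪A v, w⟫ = ⟪v, A w⟫)
    (b : Phase m) (c : ℝ) (L : Phase m → ℝ)
    (hL : ∀ z : Phase m, L z = (1 / 2 : ℝ) * ⟪z, A z⟫ + ⟪b, z⟫ + c)
    (hbracket : ∀ z : Phase m, ⟪gradient L z, Jmap (gradient 𝓗 z)⟫ = 0)
    (z₀ z₁ : Phase m) (lam mu : ℝ)
    (zbar : Phase m) (hzbar : zbar = (2:ℝ)⁻¹ • (z₀ + z₁))
    (hstep : z₁ - z₀
      = lam • Jmap (gradient 𝓗 zbar) + mu • Jmap (gradient (psi 𝓗) zbar)) :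
    L z₁ = L z₀ :=
  dth_quadratic_conservation_general m 𝓗 h𝓗 A hA b c L hL hbracket z₀ z₁ lam mu zbar hzbar hstep
end
end

section
/- Let m ≥ 1 and d = 2m, let T be a d × d real symplectic matrix (Tᵀ J T = J), let 𝓗 : ℝ^d → ℝ be three times continuously differentiable, and let c ∈ ℝ. Define 𝓚(Z) = 𝓗(TZ), ψ_𝓗(z) = ⟨J∇𝓗(z), (Hess 𝓗(z))(J∇𝓗(z))⟩, and ψ_𝓚(Z) = ⟨J∇𝓚(Z), (Hess 𝓚(Z))(J∇𝓚(Z))⟩. Let Z₀, Z₁ ∈ ℝ^d, λ, μ ∈ ℝ, and set z₀ = TZ₀, z₁ = TZ₁, Z̄ = (Z₀ + Z₁)/2, z̄ = (z₀ + z₁)/2. Then (Z₀, Z₁, λ, μ) satisfies the regularized DTH equations for 𝓚 — namely Z₁ − Z₀ = λJ∇𝓚(Z̄) + μJ∇ψ_𝓚(Z̄), 𝓚(Z̄) = 0, ψ_𝓚(Z̄) ≥ c, μ(ψ_𝓚(Z̄) − c) = 0, μ ≤ 0 — if and only if (z₀, z₁, λ, μ) satisfies the regularized DTH equations for 𝓗: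 z₁ − z₀ = λJ∇𝓗(z̄) + μJ∇ψ_𝓗(z̄), 𝓗(z̄) = 0, ψ_𝓗(z̄) ≥ c, μ(ψ_𝓗(z̄) − c) = 0, μ ≤ 0. -/
/-!
A linear symplectic `T` satisfies `Tᵀ J T = J`, hence is injective, and in finite dimension
also `T J Tᵀ = J`. The chain rule gives `∇(H ∘ T) = Tᵀ (∇H ∘ T)` and
`Hess (H ∘ T) = Tᵀ (Hess H ∘ T) T`, so `T (J ∇(H ∘ T)) = J ∇H ∘ T` and `ψ_{H ∘ T} = ψ_H ∘ T`.
Since `T` maps `Z̄` to `z̄`, the constraints of the two systems agree, and applying the injective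
`T` to the step equation for `𝓚` turns it into the step equation for `𝓗`.
-/
noncomputable section

open scoped RealInnerProductSpace

open ContinuousLinearMap

section Gradient

variable {E F : Type*} [NormedAddCommGroup E] [InnerProductSpace ℝ E] [CompleteSpace E]
  [NormedAddCommGroup F] [InnerProductSpace ℝ F] [CompleteSpace F]

theorem gradient_comp_clm {f : F → ℝ} (T : E →L[ℝ] F) {x : E}
    (hf : DifferentiableAt ℝ f (T x)) :
    gradient (fun y => f (T y)) x = adjoint T (gradient f (T x)) := by
  have hcomp : HasFDerivAt (fun y => f (T y)) _ x :=
    hf.hasGradientAt.hasFDerivAt.comp x T.hasFDerivAt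
  have hdual : (InnerProductSpace.toDual ℝ F (gradient f (T x))).comp T
      = InnerProductSpace.toDual ℝ E (adjoint T (gradient f (T x))) := by
    ext v
    simp [adjoint_inner_left]
  rw [hdual] at hcomp
  rw [hcomp.hasGradientAt.gradient, LinearIsometryEquiv.symm_apply_apply]

theorem ContDiff.gradient {f : F → ℝ} {n : WithTop ℕ∞} (hf : ContDiff ℝ (n + 1) f) :
    ContDiff ℝ n (gradient f) :=
  (InnerProductSpace.toDual ℝ F).symm.contDiff.comp (hf.fderiv_right le_rfl)

theorem fderiv_gradient_comp_clm {f : F → ℝ} (T : E →L[ℝ] F) {x : E}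
    (hf : Differentiable ℝ f) (hg : DifferentiableAt ℝ (gradient f) (T x)) :
    fderiv ℝ (gradient fun y => f (T y)) x =
      adjoint T ∘L fderiv ℝ (gradient f) (T x) ∘L T := by
  have hgrad : (gradient fun y => f (T y)) = fun y => adjoint T (gradient f (T y)) :=
    funext fun y => gradient_comp_clm T (hf (T y))
  rw [hgrad]
  exact ((adjoint T).hasFDerivAt.comp x (hg.hasFDerivAt.comp x T.hasFDerivAt)).fderiv

end Gradient

section Symplectic

variable {E : Type*} [NormedAddCommGroup E] [InnerProductSpace ℝ E] [CompleteSpace E]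
  {J T : E →L[ℝ] E}

theorem adjoint_apply_apply_apply_of_symplectic
    (hT : ∀ v w, ⟪T v, J (T w)⟫ = ⟪v, J w⟫) (w : E) : adjoint T (J (T w)) = J w :=
  ext_inner_left ℝ fun v => by rw [adjoint_inner_right, hT]

theorem injective_of_symplectic (hJ : ∀ v, J (J v) = -v)
    (hT : ∀ v w, ⟪T v, J (T w)⟫ = ⟪v, J w⟫) : Function.Injective T := by
  refine (injective_iff_map_eq_zero T).mpr fun w hw => ?_
  have hJw : J w = 0 := by
    rw [← adjoint_apply_apply_apply_of_symplectic hT, hw, map_zero, map_zero]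
  simpa [hJw] using hJ w

/-- In finite dimension `TᵀJT = J` forces `TJTᵀ = J`: `-J Tᵀ J` is a left inverse of `T`,
hence also a right inverse. -/
theorem apply_apply_adjoint_apply_of_symplectic [FiniteDimensional ℝ E]
    (hJ : ∀ v, J (J v) = -v) (hT : ∀ v w, ⟪T v, J (T w)⟫ = ⟪v, J w⟫) (w : E) :
    T (J (adjoint T w)) = J w := by
  have hleft : (-(J ∘L adjoint T ∘L J)).toLinearMap ∘ₗ T.toLinearMap = LinearMap.id := by
    ext v
    simp [adjoint_apply_apply_apply_of_symplectic hT, hJ]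
  have hright := LinearMap.congr_fun ((LinearMap.comp_eq_id_comm ℝ E).mp hleft) (J w)
  simpa [hJ] using hright

end Symplectic

section PhaseSpace

variable {m : ℕ} {T : Phase m →L[ℝ] Phase m}

theorem Jmap_Jmap (v : Phase m) : Jmap (Jmap v) = -v := by
  simp [Jmap, e]; rfl

theorem Jmap_gradient_comp_of_symplectic (hT : ∀ v w, ⟪T v, Jmap (T w)⟫ = ⟪v, Jmap w⟫)
    {g : Phase m → ℝ} {Z : Phase m} (hg : DifferentiableAt ℝ g (T Z)) :
    T (Jmap (gradient (fun Z => g (T Z)) Z)) = Jmap (gradient g (T Z)) := by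
  rw [gradient_comp_clm T hg, apply_apply_adjoint_apply_of_symplectic Jmap_Jmap hT]

theorem hess_comp_clm {f : Phase m → ℝ} (hf : ContDiff ℝ 2 f) (Z : Phase m) :
    hess (fun Z => f (T Z)) Z = adjoint T ∘L hess f (T Z) ∘L T :=
  fderiv_gradient_comp_clm T (hf.differentiable two_ne_zero)
    ((ContDiff.gradient (n := 1) hf).differentiable one_ne_zero _)

theorem psi_comp_of_symplectic (hT : ∀ v w, ⟪T v, Jmap (T w)⟫ = ⟪v, Jmap w⟫)
    {f : Phase m → ℝ} (hf : ContDiff ℝ 2 f) :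
    psi (fun Z => f (T Z)) = fun Z => psi f (T Z) := by
  funext Z
  rw [psi, psi, hess_comp_clm hf, gradient_comp_clm T (hf.differentiable two_ne_zero _)]
  simp only [comp_apply]
  rw [apply_apply_adjoint_apply_of_symplectic Jmap_Jmap hT, adjoint_inner_right,
    apply_apply_adjoint_apply_of_symplectic Jmap_Jmap hT]

theorem ContDiff.psi {f : Phase m → ℝ} {n : WithTop ℕ∞} (hf : ContDiff ℝ (n + 2) f) :
    ContDiff ℝ n (psi f) := by
  have hgrad : ContDiff ℝ (n + 1) (_root_.gradient f) := ContDiff.gradient (by rwa [add_assoc])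
  have hJgrad : ContDiff ℝ n fun z => Jmap (_root_.gradient f z) :=
    Jmap.contDiff.comp (hgrad.of_le le_self_add)
  exact hJgrad.inner ℝ ((hgrad.fderiv_right le_rfl).clm_apply hJgrad)

end PhaseSpace

theorem regularized_dth_coordinate_invariance_general (m : ℕ)
    (T : Phase m →L[ℝ] Phase m)
    (hT : ∀ v w : Phase m, ⟪T v, Jmap (T w)⟫ = ⟪v, Jmap w⟫)
    (𝓗 : Phase m → ℝ) (h𝓗 : ContDiff ℝ 3 𝓗) (c : ℝ)
    (𝓚 : Phase m → ℝ) (h𝓚 : ∀ Z : Phase m, 𝓚 Z = 𝓗 (T Z))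
    (Z₀ Z₁ : Phase m) (lam mu : ℝ)
    (z₀ z₁ : Phase m) (hz₀ : z₀ = T Z₀) (hz₁ : z₁ = T Z₁)
    (Zbar : Phase m) (hZbar : Zbar = (2:ℝ)⁻¹ • (Z₀ + Z₁))
    (zbar : Phase m) (hzbar : zbar = (2:ℝ)⁻¹ • (z₀ + z₁)) :
    (Z₁ - Z₀ = lam • Jmap (gradient 𝓚 Zbar) + mu • Jmap (gradient (psi 𝓚) Zbar) ∧
      𝓚 Zbar = 0 ∧ psi 𝓚 Zbar ≥ c ∧ mu * (psi 𝓚 Zbar - c) = 0 ∧ mu ≤ 0)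
    ↔ (z₁ - z₀ = lam • Jmap (gradient 𝓗 zbar) + mu • Jmap (gradient (psi 𝓗) zbar) ∧
      𝓗 zbar = 0 ∧ psi 𝓗 zbar ≥ c ∧ mu * (psi 𝓗 zbar - c) = 0 ∧ mu ≤ 0) := by
  obtain rfl : 𝓚 = fun Z => 𝓗 (T Z) := funext h𝓚
  have hbar : zbar = T Zbar := by rw [hzbar, hZbar, hz₀, hz₁, map_smul, map_add]
  have hψ := psi_comp_of_symplectic hT (h𝓗.of_le (by norm_num))
  have hψdiff : Differentiable ℝ (psi 𝓗) :=
    (ContDiff.psi (n := 1) h𝓗).differentiable one_ne_zero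
  have hstep : Z₁ - Z₀ = lam • Jmap (gradient (fun Z => 𝓗 (T Z)) Zbar)
        + mu • Jmap (gradient (psi fun Z => 𝓗 (T Z)) Zbar)
      ↔ z₁ - z₀ = lam • Jmap (gradient 𝓗 zbar) + mu • Jmap (gradient (psi 𝓗) zbar) := by
    rw [← (injective_of_symplectic Jmap_Jmap hT).eq_iff, hψ]
    simp only [map_sub, map_add, map_smul, hz₀, hz₁, hbar,
      Jmap_gradient_comp_of_symplectic hT (h𝓗.differentiable (by norm_num) _),
      Jmap_gradient_comp_of_symplectic hT (hψdiff _)]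
  rw [hstep, hψ, hbar]

/-- coordinate invariance of regularized DTH dynamics.
Let `T` be a linear symplectic transformation (`⟨Tv, J(Tw)⟩ = ⟨v, Jw⟩`),
`𝓚(Z) = 𝓗(TZ)`, `z₀ = TZ₀`, `z₁ = TZ₁`. Then `(Z₀, Z₁, λ, μ)` satisfies the
regularized DTH equations for `𝓚` iff `(z₀, z₁, λ, μ)` satisfies them
for `𝓗` (same multipliers `λ`, `μ` and regularization level `c`). -/
theorem regularized_dth_coordinate_invariance (m : ℕ) (hm : 1 ≤ m)
    (T : Phase m →L[ℝ] Phase m)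
    (hT : ∀ v w : Phase m, ⟪T v, Jmap (T w)⟫ = ⟪v, Jmap w⟫)
    (𝓗 : Phase m → ℝ) (h𝓗 : ContDiff ℝ 3 𝓗) (c : ℝ)
    (𝓚 : Phase m → ℝ) (h𝓚 : ∀ Z : Phase m, 𝓚 Z = 𝓗 (T Z))
    (Z₀ Z₁ : Phase m) (lam mu : ℝ)
    (z₀ z₁ : Phase m) (hz₀ : z₀ = T Z₀) (hz₁ : z₁ = T Z₁)
    (Zbar : Phase m) (hZbar : Zbar = (2:ℝ)⁻¹ • (Z₀ + Z₁))
    (zbar : Phase m) (hzbar : zbar = (2:ℝ)⁻¹ • (z₀ + z₁)) :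
    (Z₁ - Z₀ = lam • Jmap (gradient 𝓚 Zbar) + mu • Jmap (gradient (psi 𝓚) Zbar) ∧
      𝓚 Zbar = 0 ∧ psi 𝓚 Zbar ≥ c ∧ mu * (psi 𝓚 Zbar - c) = 0 ∧ mu ≤ 0)
    ↔ (z₁ - z₀ = lam • Jmap (gradient 𝓗 zbar) + mu • Jmap (gradient (psi 𝓗) zbar) ∧
      𝓗 zbar = 0 ∧ psi 𝓗 zbar ≥ c ∧ mu * (psi 𝓗 zbar - c) = 0 ∧ mu ≤ 0) :=
  regularized_dth_coordinate_invariance_general m T hT 𝓗 h𝓗 c 𝓚 h𝓚 Z₀ Z₁ lam mu z₀ z₁ hz₀ hz₁ Zbar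
    hZbar zbar hzbar
end
end
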